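/- arXiv:math/0703561 — 6 statements merged into one kernel-verified Lean document; each statement's English description precedes it below -/
import Mathlib

section
/- In a formal topology, the localization axiom Loc (if a ◁ U and a ◁ V then a ◁ U ∧ V) is equivalent, given the other axioms Ref, Tra, Ext, to the axiom Loc': if a ◁ U then a ◁ {a} ∧ U. -/
/-- The formal intersection `U ∧ V = {x | ∃ u ∈ U, ∃ v ∈ V, x ≤ u ∧ x ≤ v}`. -/
def fmeet {S : Type*} [Preorder S] (U V : Set S) : Set S :=
  {x | ∃ u ∈ U, ∃ v ∈ V, x ≤ u ∧ x ≤ v}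

/-- In a formal topology (with axioms Ref, Tra, Ext), the localization axiom Loc
(`a ◁ U` and `a ◁ V` imply `a ◁ U ∧ V`) is equivalent to Loc'
(`a ◁ U` implies `a ◁ {a} ∧ U`). -/
theorem loc_iff_loc' {S : Type*} [Preorder S] (cov : S → Set S → Prop)
    (ref : ∀ (a : S) (U : Set S), a ∈ U → cov a U)
    (tra : ∀ (a : S) (U V : Set S), cov a U → (∀ u ∈ U, cov u V) → cov a V)
    (ext : ∀ a b : S, a ≤ b → cov a {b}) :
    (∀ (a : S) (U V : Set S), cov a U → cov a V → cov a (fmeet U V)) ↔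
    (∀ (a : S) (U : Set S), cov a U → cov a (fmeet {a} U)) := by
  constructor
  · intro loc a U hU
    exact loc a {a} U (ref a {a} rfl) hU
  · intro loc' a U V hU hV
    have h1 : cov a (fmeet {a} U) := loc' a U hU
    refine tra a _ _ h1 ?_
    rintro x ⟨s, hs, u, hu, hxs, hxu⟩
    have hsa : x ≤ a := le_of_le_of_eq hxs hs
    have hxV : cov x V := tra x {a} V (ext x a hsa) (by rintro b rfl; exact hV)
    have h2 : cov x (fmeet {x} V) := loc' x V hxV
    refine tra x _ _ h2 ?_
    rintro y ⟨t, ht, v, hv, hyt, hyv⟩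
    exact ref y _ ⟨u, hu, v, hv, le_trans (le_of_le_of_eq hyt ht) hxu, hyv⟩
end

section
/- Let Pos be a located predicate on a formal topology. Then every U is covered by U⁺ ∪ ¬Pos, where U⁺ = {u ∈ U : Pos(u)} and ¬Pos = {u : ¬Pos(u)}; consequently the closed sublocale determined by the open ¬Pos is overt with Pos as its positivity predicate. -/
/-- A formal ball of the localic completion: a center and a positive rational radius. -/
structure Ball (X : Type*) where
  c : X
  r : ℚ
  r_pos : 0 < r

variable {X : Type*} [MetricSpace X]

/-- `a < b` for formal balls: `d(center a, center b) < radius b − radius a`. -/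
def bLT (a b : Ball X) : Prop := dist a.c b.c < ((b.r - a.r : ℚ) : ℝ)

/-- `a ≤ b` for formal balls: `d(center a, center b) < t` for every rational
`t > radius b − radius a`. -/
def bLE (a b : Ball X) : Prop := ∀ t : ℚ, b.r - a.r < t → dist a.c b.c < (t : ℝ)

/-- The formal intersection of two sets of balls. -/
def bMeet (U V : Set (Ball X)) : Set (Ball X) :=
  {x | ∃ u ∈ U, ∃ v ∈ V, bLE x u ∧ bLE x v}

/-- The cover of the localic completion `loc(X)`: inductively generated from the formal
topology axioms (Ref, Tra, Ext, Loc) together with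
M1: every ball is covered by the balls strictly inside it, and
M2: (the whole space, hence) every ball is covered by the balls of any fixed radius `r > 0`. -/
inductive MCov : Ball X → Set (Ball X) → Prop where
  | ref {a : Ball X} {U : Set (Ball X)} : a ∈ U → MCov a U
  | tra {a : Ball X} {U V : Set (Ball X)} : MCov a U → (∀ u ∈ U, MCov u V) → MCov a V
  | ext {a b : Ball X} : bLE a b → MCov a {b}
  | loc {a : Ball X} {U V : Set (Ball X)} : MCov a U → MCov a V → MCov a (bMeet U V)
  | m1 {a : Ball X} : MCov a {v | bLT v a}
  | m2 {a : Ball X} (r : ℚ) (hr : 0 < r) : MCov a {b | b.r = r}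

/-- `Pos` is positively closed: `Pos u` and `u ◁ V` imply `Pos v` for some `v ∈ V`. -/
def PosClosed (Pos : Set (Ball X)) : Prop :=
  ∀ (u : Ball X) (V : Set (Ball X)), u ∈ Pos → MCov u V → ∃ v ∈ V, v ∈ Pos

/-- A located predicate `Pos` on the localic completion of a metric space satisfies
`U ◁ U⁺ ∪ ¬Pos`, so the closed sublocale determined by the open `¬Pos` is overt
with `Pos` as its positivity predicate (Pos and Mon for the cover `u ◁ V ∪ ¬Pos`). -/
theorem located_gives_overt_closed (Pos : Set (Ball X))
    (hPC : PosClosed Pos)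
    (hloc : ∀ v u : Ball X, bLT v u → v ∉ Pos ∨ u ∈ Pos) :
    (∀ (U : Set (Ball X)), ∀ u ∈ U,
        MCov u ({w | w ∈ U ∧ w ∈ Pos} ∪ {w | w ∉ Pos})) ∧
    (∀ (u : Ball X) (V : Set (Ball X)), u ∈ Pos →
        MCov u (V ∪ {w | w ∉ Pos}) → ∃ v ∈ V, v ∈ Pos) := by
  constructor
  · intro U u hu
    refine MCov.tra MCov.m1 ?_
    intro v hv
    rcases hloc v u hv with h | h
    · exact MCov.ref (Or.inr h)
    · refine MCov.tra (MCov.ext (b := u) ?_) ?_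
      · intro t ht
        exact lt_trans hv (by exact_mod_cast ht)
      · rintro w rfl
        exact MCov.ref (Or.inl ⟨hu, h⟩)
  · intro u V hu hcov
    rcases hPC u _ hu hcov with ⟨v, hvV, hvP⟩
    rcases hvV with h | h
    · exact ⟨v, h, hvP⟩
    · exact absurd hvP h
end

section
/- Let X be a metric space and a, b basic opens of its localic completion. If a is way below b (every cover of b has a K-finite subcover of a), then there exists a basic open c with a ◁ {c} and c < b. -/
variable {X : Type*} [MetricSpace X]

/-- If `a` is way below `b` in the localic completion of a metric space (every cover
of `b` has a K-finite subcover of `a`), then there is a ball `c` with `a ◁ {c}`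
and `c < b`. -/
theorem wayBelow_exists_lt (a b : Ball X)
    (h : ∀ U : Set (Ball X), MCov b U →
      ∃ Fs : Finset (Ball X), ↑Fs ⊆ U ∧ MCov a ↑Fs) :
    ∃ c : Ball X, MCov a {c} ∧ bLT c b := by
  obtain ⟨Fs, hFsub, hFcov⟩ := h {v | bLT v b} MCov.m1
  rcases Fs.eq_empty_or_nonempty with rfl | hne
  · refine ⟨⟨b.c, b.r / 2, by linarith [b.r_pos]⟩, ?_, ?_⟩
    · exact MCov.tra hFcov (by simp)
    · simp only [bLT, dist_self]
      have hb : (0:ℝ) < (b.r:ℝ) := by exact_mod_cast b.r_pos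
      push_cast
      linarith
  · set m : ℝ := Fs.inf' hne (fun v => ((b.r - v.r : ℚ) : ℝ) - dist v.c b.c) with hm
    have hmpos : 0 < m := by
      rw [hm, Finset.lt_inf'_iff]
      intro v hv
      have := hFsub hv
      simp only [Set.mem_setOf_eq, bLT] at this
      linarith
    obtain ⟨ε, hε0, hεm⟩ := exists_rat_btwn hmpos
    have hε0' : (0 : ℚ) < ε := by exact_mod_cast hε0
    obtain ⟨v0, hv0⟩ := hne
    have hkey : ∀ v ∈ Fs, ((b.r - v.r : ℚ) : ℝ) - dist v.c b.c > (ε : ℝ) := by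
      intro v hv
      calc (ε : ℝ) < m := hεm
        _ ≤ _ := Finset.inf'_le _ hv
    have hεb : ε < b.r := by
      have h0 := hkey v0 hv0
      have : (ε : ℝ) < ((b.r : ℚ) : ℝ) := by
        have := dist_nonneg (x := v0.c) (y := b.c)
        have := v0.r_pos
        push_cast at h0 ⊢
        nlinarith [v0.r_pos, (show ((v0.r : ℚ) : ℝ) > 0 by exact_mod_cast v0.r_pos)]
      exact_mod_cast this
    refine ⟨⟨b.c, b.r - ε, by linarith⟩, ?_, ?_⟩
    · refine MCov.tra hFcov ?_
      intro v hv
      refine MCov.ext ?_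
      intro t ht
      have h1 := hkey v (by exact_mod_cast hv)
      have : ((b.r - ε - v.r : ℚ) : ℝ) < (t : ℝ) := by exact_mod_cast ht
      push_cast at h1 this ⊢
      linarith
    · simp only [bLT, dist_self]
      push_cast
      linarith
end

section
/- The localic completion of a Dedekind metric space is regular: whenever B_r(x) < B_s(y) (i.e., d(x,y) < s − r), B_r(x) is well inside B_s(y), meaning the top is covered by B_s(y) together with the complement {c : c ∧ B_r(x) ◁ ∅} of B_r(x). -/
variable {X : Type*} [MetricSpace X]

/-- The localic completion of a (Dedekind) metric space is regular: if `a < b`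
then `a` is well inside `b`, i.e. the top is covered by `{b}` together with the
complement `{c | c ∧ a ◁ ∅}` of `a`. -/
theorem lt_implies_wellInside (a b : Ball X) (h : bLT a b) :
    ∀ u : Ball X,
      MCov u ({c | ∀ w ∈ bMeet {c} {a}, MCov w (∅ : Set (Ball X))} ∪ {b}) := by
  intro u
  obtain ⟨q, hq1, hq2⟩ := exists_rat_btwn h
  have hq2' : q < b.r - a.r := by exact_mod_cast hq2
  set δ : ℚ := (b.r - a.r - q) / 2 with hδdef
  have hδ : 0 < δ := by rw [hδdef]; linarith
  have hδval : (δ : ℝ) = ((b.r : ℝ) - a.r - q) / 2 := by rw [hδdef]; push_cast; ring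
  refine MCov.tra (MCov.m2 δ hδ) ?_
  intro c hc
  have hcr : c.r = δ := hc
  by_cases hcase : dist c.c a.c < ((a.r + δ : ℚ) : ℝ)
  · have hlt : bLT c b := by
      unfold bLT
      have ht := dist_triangle c.c b.c a.c
      rw [dist_comm b.c a.c, dist_comm a.c b.c] at ht
      have ht2 := dist_triangle c.c a.c b.c
      push_cast at hcase ⊢
      rw [hcr]
      push_cast
      linarith
    have hle : bLE c b := by
      intro t htt
      calc dist c.c b.c < ((b.r - c.r : ℚ) : ℝ) := hlt
        _ < t := by exact_mod_cast htt
    refine MCov.tra (MCov.ext hle) ?_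
    intro x hx
    exact MCov.ref (Or.inr hx)
  · refine MCov.ref (Or.inl ?_)
    intro w hw
    obtain ⟨u', hu', v, hv, hwc, hwa⟩ := hw
    exfalso
    rw [Set.mem_singleton_iff] at hu' hv
    rw [hu'] at hwc
    rw [hv] at hwa
    have h1 := hwc (c.r - w.r + w.r / 2) (by linarith [w.r_pos])
    have h2 := hwa (a.r - w.r + w.r / 2) (by linarith [w.r_pos])
    have ht := dist_triangle c.c w.c a.c
    rw [dist_comm c.c w.c] at ht
    apply hcase
    push_cast at h1 h2 ⊢
    rw [hcr] at h1
    push_cast at h1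
    have hwr : (0 : ℝ) < (w.r : ℝ) := by exact_mod_cast w.r_pos
    linarith
end

section
/- In a compact regular locale, every overt closed sublocale is located: if Y is a closed sublocale carrying a positivity predicate Pos_Y, then for all basic opens u ≺ v (u well inside v), either Pos_Y(v) or ¬Pos_Y(u). -/
/-- `u` is well inside `v`: there is `w` with `u ⊓ w = ⊥` and `v ⊔ w = ⊤`. -/
def wIn {L : Type*} [Lattice L] [BoundedOrder L] (u v : L) : Prop :=
  ∃ w : L, u ⊓ w = ⊥ ∧ v ⊔ w = ⊤

/-- The cover of the compact regular locale presented by a normal distributive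
lattice: `u ◁ V` iff every `w` well inside `u` is below the join of a finite
subset of `V`. -/
def LCov {L : Type*} [Lattice L] [BoundedOrder L] (u : L) (V : Set L) : Prop :=
  ∀ w : L, wIn w u → ∃ Fs : Finset L, ↑Fs ⊆ V ∧ w ≤ Fs.sup id

/-- In a compact regular locale presented by a normal distributive lattice, every
overt closed sublocale (cover `u ◁_Y V` iff `u ◁ V ∪ C`, carrying a positivity
predicate `PosY`) is located: if `u` is well inside `v` then `PosY v` or `¬PosY u`. -/
theorem overt_closed_located {L : Type*} [DistribLattice L] [BoundedOrder L]
    (hnorm : ∀ b₁ b₂ : L, b₁ ⊔ b₂ = ⊤ →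
      ∃ c₁ c₂ : L, c₁ ⊓ c₂ = ⊥ ∧ c₁ ⊔ b₁ = ⊤ ∧ c₂ ⊔ b₂ = ⊤)
    (C : Set L) (PosY : Set L)
    (hpos : ∀ (U : Set L), ∀ u ∈ U, LCov u ({w | w ∈ U ∧ w ∈ PosY} ∪ C))
    (hmon : ∀ (u : L) (V : Set L), u ∈ PosY → LCov u (V ∪ C) → ∃ v ∈ V, v ∈ PosY) :
    ∀ u v : L, wIn u v → v ∈ PosY ∨ u ∉ PosY := by
  rintro u v ⟨w₀, hw₀u, hw₀v⟩
  by_cases hu : u ∈ PosY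
  · left
    have hcov : LCov u ({v} ∪ C) := by
      rintro w ⟨t, hwt, hut⟩
      refine ⟨{v}, by simp, ?_⟩
      have h1 : w ⊓ w₀ = ⊥ := by
        have : w ⊓ w₀ = w ⊓ w₀ ⊓ (u ⊔ t) := by rw [hut, inf_top_eq]
        rw [this, inf_sup_left]
        have e1 : w ⊓ w₀ ⊓ u ≤ ⊥ := by
          calc w ⊓ w₀ ⊓ u ≤ u ⊓ w₀ := by
                exact le_inf inf_le_right (le_trans inf_le_left inf_le_right)
            _ = ⊥ := hw₀u
        have e2 : w ⊓ w₀ ⊓ t ≤ ⊥ := by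
          calc w ⊓ w₀ ⊓ t ≤ w ⊓ t := by
                exact inf_le_inf_right t (inf_le_left)
            _ = ⊥ := hwt
        simp [le_bot_iff.mp e1, le_bot_iff.mp e2]
      have h2 : w = (w ⊓ v) ⊔ (w ⊓ w₀) := by
        rw [← inf_sup_left, hw₀v, inf_top_eq]
      have : w ≤ v := by
        rw [h2, h1, sup_bot_eq]; exact inf_le_right
      simpa using this
    obtain ⟨x, hx, hxpos⟩ := hmon u {v} hu hcov
    rwa [Set.mem_singleton_iff.mp hx] at hxpos
  · right; exact hu
end

section
/- The theory of located predicates on a normal distributive lattice L and the propositional geometric theory of the Vietoris lattice V(L) are bi-interpretable: setting Pos(u) := ◊u interprets Loc in V(L), and given a located predicate Pos, setting ◊u := Pos(u) and □u := (u ∨ ¬Pos covers the top) validates all Vietoris relations, including □(u∨v) ≤ □u ∨ ◊v and □u ∧ ◊v ≤ ◊(u∧v). -/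
/-- In a distributive lattice, `wIn u v` implies `u ≤ v`. -/
lemma wIn_le {L : Type*} [DistribLattice L] [BoundedOrder L] {u v : L} (h : wIn u v) :
    u ≤ v := by
  obtain ⟨w, hw1, hw2⟩ := h
  calc u = u ⊓ (v ⊔ w) := by rw [hw2, inf_top_eq]
    _ = (u ⊓ v) ⊔ (u ⊓ w) := inf_sup_left u v w
    _ = u ⊓ v := by rw [hw1, sup_bot_eq]
    _ ≤ v := inf_le_right

open Classical in
/-- Split a finite subset of `{u} ∪ Posᶜ` into `u` plus non-`Pos` elements. -/
lemma boxAux {L : Type*} [DistribLattice L] [BoundedOrder L] (Pos : Set L) (u : L)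
    (Fs : Finset L) (h : ↑Fs ⊆ ({u} ∪ {w | w ∉ Pos} : Set L)) :
    ∃ N : Finset L, ↑N ⊆ {w : L | w ∉ Pos} ∧ Fs.sup id ≤ u ⊔ N.sup id := by
  refine ⟨Fs.filter (· ∉ Pos), ?_, ?_⟩
  · intro x hx
    exact (Finset.mem_filter.mp (Finset.mem_coe.mp hx)).2
  · apply Finset.sup_le
    intro x hx
    rcases h hx with hxu | hxp
    · exact le_sup_of_le_left (le_of_eq hxu)
    · exact le_sup_of_le_right (Finset.le_sup (f := id) (Finset.mem_filter.mpr ⟨hx, hxp⟩))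

/-- Bi-interpretability of the theory Loc of located predicates on a normal
distributive lattice `L` with the theory of the Vietoris lattice `V(L)`.

First conjunct: in any bounded distributive lattice `V` with operations `◊, □ : L → V`
satisfying the Vietoris relations, setting `Pos u := ◊u` interprets Loc: `v ≺ u`
implies `◊v ≺ ◊u` (so `¬◊v ∨ ◊u` holds in the generated locale).

Second conjunct: given a located predicate `Pos` on `L` (positively closed for the
cover and located), setting `◊u := Pos u` and `□u := (u ∨ ¬Pos covers the top)`
validates all the Vietoris relations, including `□(u∨v) ≤ □u ∨ ◊v` and
`□u ∧ ◊v ≤ ◊(u∧v)`. -/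
theorem loc_vietoris_biinterpretable {L : Type*} [DistribLattice L] [BoundedOrder L]
    (hnorm : ∀ b₁ b₂ : L, b₁ ⊔ b₂ = ⊤ →
      ∃ c₁ c₂ : L, c₁ ⊓ c₂ = ⊥ ∧ c₁ ⊔ b₁ = ⊤ ∧ c₂ ⊔ b₂ = ⊤) :
    (∀ (V : Type) [DistribLattice V] [BoundedOrder V] (dia box : L → V),
      (∀ u v : L, dia u ⊔ dia v = dia (u ⊔ v)) →
      (∀ u v : L, box u ⊓ box v = box (u ⊓ v)) →
      (∀ u v : L, box u ⊓ dia v ≤ dia (u ⊓ v)) →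
      (∀ u v : L, box (u ⊔ v) ≤ box u ⊔ dia v) →
      dia ⊥ = ⊥ → box ⊤ = ⊤ →
      ∀ u v : L, wIn v u → wIn (dia v) (dia u)) ∧
    (∀ Pos : Set L,
      (∀ (u : L) (W : Set L), u ∈ Pos → LCov u W → ∃ w ∈ W, w ∈ Pos) →
      (∀ u v : L, wIn u v → v ∈ Pos ∨ u ∉ Pos) →
      ((∀ u v : L, (u ∈ Pos ∨ v ∈ Pos) ↔ u ⊔ v ∈ Pos) ∧
       (∀ u v : L,
         ((∀ a : L, LCov a ({u} ∪ {w | w ∉ Pos})) ∧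
          (∀ a : L, LCov a ({v} ∪ {w | w ∉ Pos}))) ↔
         (∀ a : L, LCov a ({u ⊓ v} ∪ {w | w ∉ Pos}))) ∧
       (∀ u v : L, (∀ a : L, LCov a ({u} ∪ {w | w ∉ Pos})) → v ∈ Pos → u ⊓ v ∈ Pos) ∧
       (∀ u v : L, (∀ a : L, LCov a ({u ⊔ v} ∪ {w | w ∉ Pos})) →
         (∀ a : L, LCov a ({u} ∪ {w | w ∉ Pos})) ∨ v ∈ Pos) ∧
       (⊥ : L) ∉ Pos ∧
       (∀ a : L, LCov a ({(⊤ : L)} ∪ {w | w ∉ Pos})))) := by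
  constructor
  · rintro V _ _ dia box hdsup hbinf hmix1 hmix2 hd0 hb1 u v ⟨w, hvw, huw⟩
    refine ⟨box w, le_antisymm ?_ bot_le, top_le_iff.mp ?_⟩
    · calc dia v ⊓ box w = box w ⊓ dia v := inf_comm _ _
        _ ≤ dia (w ⊓ v) := hmix1 w v
        _ = ⊥ := by rw [inf_comm, hvw, hd0]
    · calc (⊤ : V) = box (w ⊔ u) := by rw [sup_comm, huw, hb1]
        _ ≤ box w ⊔ dia u := hmix2 w u
        _ ≤ dia u ⊔ box w := by rw [sup_comm]
  · intro Pos hpc hloc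
    classical
    have hmono : ∀ u v : L, u ≤ v → u ∈ Pos → v ∈ Pos := by
      intro u v huv hu
      obtain ⟨w, hw, hwp⟩ := hpc u {v} hu (fun x hx => ⟨{v}, by simp, by
        simpa using le_trans (wIn_le hx) huv⟩)
      rwa [Set.mem_singleton_iff.mp hw] at hwp
    refine ⟨?_, ?_, ?_, ?_, ?_, ?_⟩
    · -- ◊u ∨ ◊v ↔ ◊(u⊔v)
      intro u v
      constructor
      · rintro (h | h)
        · exact hmono u _ le_sup_left h
        · exact hmono v _ le_sup_right h
      · intro h
        obtain ⟨w, hw, hwp⟩ := hpc (u ⊔ v) {u, v} h (fun x hx => ⟨{u, v}, by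
            intro y hy
            simpa using (by simpa using hy : y = u ∨ y = v), by
            have := wIn_le hx
            simpa [Finset.sup_insert] using this⟩)
        rcases hw with rfl | rfl
        · exact Or.inl hwp
        · exact Or.inr hwp
    · -- □u ∧ □v ↔ □(u ⊓ v)
      intro u v
      constructor
      · rintro ⟨hu, hv⟩ a w hw
        obtain ⟨F1, hF1, hw1⟩ := hu a w hw
        obtain ⟨F2, hF2, hw2⟩ := hv a w hw
        obtain ⟨N1, hN1, hle1⟩ := boxAux Pos u F1 hF1
        obtain ⟨N2, hN2, hle2⟩ := boxAux Pos v F2 hF2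
        refine ⟨insert (u ⊓ v) (N1 ∪ N2), ?_, ?_⟩
        · intro x hx
          rcases (by simpa using hx : x = u ⊓ v ∨ x ∈ N1 ∨ x ∈ N2) with rfl | h | h
          · exact Or.inl rfl
          · exact Or.inr (hN1 (Finset.mem_coe.mpr h))
          · exact Or.inr (hN2 (Finset.mem_coe.mpr h))
        · have h12 : w ≤ (u ⊔ N1.sup id) ⊓ (v ⊔ N2.sup id) :=
            le_inf (le_trans hw1 hle1) (le_trans hw2 hle2)
          refine le_trans h12 ?_
          rw [Finset.sup_insert, Finset.sup_union]
          calc (u ⊔ N1.sup id) ⊓ (v ⊔ N2.sup id)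
              ≤ (u ⊓ (v ⊔ N2.sup id)) ⊔ N1.sup id := by
                rw [inf_sup_right]
                exact sup_le_sup_left inf_le_left _
            _ ≤ ((u ⊓ v) ⊔ N2.sup id) ⊔ N1.sup id := by
                refine sup_le_sup_right ?_ _
                rw [inf_sup_left]
                exact sup_le_sup_left inf_le_right _
            _ ≤ id (u ⊓ v) ⊔ (N1.sup id ⊔ N2.sup id) := by
                simp only [id_eq]
                rw [sup_assoc]
                exact sup_le_sup_left (le_of_eq (sup_comm _ _)) _
      · intro h
        have key : ∀ t : L, u ⊓ v ≤ t → ∀ a : L, LCov a ({t} ∪ {w | w ∉ Pos}) := by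
          intro t ht a w hw
          obtain ⟨Fs, hFs, hwle⟩ := h a w hw
          obtain ⟨N, hN, hle⟩ := boxAux Pos (u ⊓ v) Fs hFs
          refine ⟨insert t N, ?_, ?_⟩
          · intro x hx
            rcases Finset.mem_insert.mp (by simpa using hx) with rfl | hx'
            · exact Or.inl rfl
            · exact Or.inr (hN hx')
          · rw [Finset.sup_insert]
            exact le_trans hwle (le_trans hle (sup_le_sup_right ht _))
        exact ⟨key u inf_le_left, key v inf_le_right⟩
    · -- □u ⊓ ◊v ≤ ◊(u⊓v)
      intro u v hu hv
      have hcov : LCov v ({u ⊓ v} ∪ {w | w ∉ Pos}) := by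
        intro w hw
        obtain ⟨Fs, hFs, hwle⟩ := hu v w hw
        obtain ⟨N, hN, hle⟩ := boxAux Pos u Fs hFs
        refine ⟨insert (u ⊓ v) N, ?_, ?_⟩
        · intro x hx
          rcases Finset.mem_insert.mp (by simpa using hx) with rfl | hx'
          · exact Or.inl rfl
          · exact Or.inr (hN hx')
        · rw [Finset.sup_insert]
          have hwv : w ≤ v := wIn_le hw
          have hmid : w ≤ w ⊓ (u ⊔ N.sup id) := le_inf le_rfl (le_trans hwle hle)
          refine le_trans hmid ?_
          rw [inf_sup_left]
          exact sup_le_sup (le_inf inf_le_right (le_trans inf_le_left hwv)) inf_le_right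
      obtain ⟨w, hw, hwp⟩ := hpc v _ hv hcov
      rcases hw with rfl | hwn
      · exact hwp
      · exact absurd hwp hwn
    · -- □(u⊔v) ≤ □u ∨ ◊v
      intro u v h
      by_cases hv : v ∈ Pos
      · exact Or.inr hv
      · left
        intro a w hw
        obtain ⟨Fs, hFs, hwle⟩ := h a w hw
        obtain ⟨N, hN, hle⟩ := boxAux Pos (u ⊔ v) Fs hFs
        refine ⟨insert u (insert v N), ?_, ?_⟩
        · intro x hx
          rcases (by simpa using hx : x = u ∨ x = v ∨ x ∈ N) with rfl | rfl | h
          · exact Or.inl rfl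
          · exact Or.inr hv
          · exact Or.inr (hN (Finset.mem_coe.mpr h))
        · rw [Finset.sup_insert, Finset.sup_insert]
          refine le_trans hwle (le_trans hle ?_)
          simp only [id_eq]
          rw [← sup_assoc]
    · -- ◊⊥ = ⊥
      intro hbot
      obtain ⟨w, hw, _⟩ := hpc ⊥ ∅ hbot (fun x hx => ⟨∅, by simp, by
        simpa using wIn_le hx⟩)
      exact hw
    · -- □⊤
      intro a w hw
      exact ⟨{⊤}, by simp, by simp⟩
end
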